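/- Let M = 2^z and let k be an integer with 0 ≤ k ≤ z; set p = z − k and assume p ≤ L. Let Σ be the family of all 2^k-element subsets of {0,1}^{L−p}, and let D ⊆ Σ^{2^p} be a block code of length 2^p over the alphabet Σ whose minimum Hamming distance over Σ (number of coordinates in which two distinct codewords differ) is at least δ+1. For a codeword (U_0,…,U_{2^p−1}) ∈ D, define the associated set ⋃_{j=0}^{2^p−1} { (I_p(j), u) : u ∈ U_j } ∈ X_M^L, where I_p(j) ∈ {0,1}^p is the p-bit binary representation of j and (I_p(j), u) denotes concatenation. Then C₃ = { associated set of w : w ∈ D } is an (s,t,L)_H error-correcting code for all s,t ∈ ℕ with s + 2t ≤ δ. -/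

import Mathlib

/-- The Hamming error ball `B^H_{s,t,ε}(S)`. -/
def hamBall (L s t ε : ℕ) (S : Finset (Fin L → Bool)) :
    Set (Finset (Fin L → Bool)) :=
  { S' | ∃ (U Lo F : Finset (Fin L → Bool)) (f : (Fin L → Bool) → (Fin L → Bool)),
      Disjoint U Lo ∧ Disjoint U F ∧ Disjoint Lo F ∧
      U ∪ Lo ∪ F = S ∧ Lo.card ≤ s ∧ F.card ≤ t ∧
      (∀ x ∈ F, hammingDist x (f x) ≤ ε) ∧
      S' = U ∪ F.image f }

/-- `C` is an `(s,t,ε)_H` error-correcting code. -/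
def isHamCode (L s t ε : ℕ) (C : Set (Finset (Fin L → Bool))) : Prop :=
  ∀ S₁ ∈ C, ∀ S₂ ∈ C, S₁ ≠ S₂ →
    hamBall L s t ε S₁ ∩ hamBall L s t ε S₂ = ∅

/-- Concatenation of a prefix of length `p` and a suffix of length `L - p`. -/
def concatVec (p L : ℕ) (a : Fin p → Bool) (b : Fin (L - p) → Bool) : Fin L → Bool :=
  fun j => if h : (j : ℕ) < p then a ⟨j, h⟩
           else b ⟨(j : ℕ) - p, by have := j.isLt; omega⟩

/-- The `p`-bit binary representation `I_p(j)` of `j < 2^p`. -/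
def natToBits (p : ℕ) (j : Fin (2 ^ p)) : Fin p → Bool :=
  fun i => (j : ℕ).testBit i

lemma concat_inj {p L : ℕ} (hp : p ≤ L) {a a' : Fin p → Bool} {b b' : Fin (L-p) → Bool}
    (h : concatVec p L a b = concatVec p L a' b') : a = a' ∧ b = b' := by
  constructor
  · funext i
    have := congrFun h ⟨i, lt_of_lt_of_le i.isLt hp⟩
    simpa [concatVec, i.isLt] using this
  · funext i
    have hlt : p + (i : ℕ) < L := by have := i.isLt; omega
    have h2 := congrFun h ⟨p + i, hlt⟩
    simp only [concatVec, Fin.val_mk] at h2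
    rw [dif_neg (by omega : ¬ (p + (i:ℕ) < p)), dif_neg (by omega : ¬ (p + (i:ℕ) < p))] at h2
    simpa [Nat.add_sub_cancel_left] using h2

lemma natToBits_inj {p : ℕ} : Function.Injective (natToBits p) := by
  intro j j' h
  apply Fin.ext
  apply Nat.eq_of_testBit_eq
  intro i
  by_cases hi : i < p
  · exact congrFun h ⟨i, hi⟩
  · have h1 : (j:ℕ) < 2 ^ i := lt_of_lt_of_le j.isLt (Nat.pow_le_pow_right (by norm_num) (by omega))
    have h2 : (j':ℕ) < 2 ^ i := lt_of_lt_of_le j'.isLt (Nat.pow_le_pow_right (by norm_num) (by omega))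
    simp [Nat.testBit_lt_two_pow h1, Nat.testBit_lt_two_pow h2]

/-- The encoding map `(j, u) ↦ (I_p(j), u)`. -/
def encF (p L : ℕ) (j : Fin (2^p)) (u : Fin (L-p) → Bool) : Fin L → Bool :=
  concatVec p L (natToBits p j) u

lemma encF_inj {p L : ℕ} (hp : p ≤ L) {j j' : Fin (2^p)} {u u' : Fin (L-p) → Bool}
    (h : encF p L j u = encF p L j' u') : j = j' ∧ u = u' := by
  obtain ⟨h1, h2⟩ := concat_inj hp h
  exact ⟨natToBits_inj h1, h2⟩

/-- The associated set of a codeword. -/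
def SofF (p L : ℕ) (w : Fin (2^p) → Finset (Fin (L-p) → Bool)) : Finset (Fin L → Bool) :=
  Finset.univ.biUnion fun j => (w j).image (encF p L j)

lemma mem_SofF {p L : ℕ} (w : Fin (2^p) → Finset (Fin (L-p) → Bool)) (x : Fin L → Bool) :
    x ∈ SofF p L w ↔ ∃ j, ∃ u ∈ w j, x = encF p L j u := by
  simp only [SofF, Finset.mem_biUnion, Finset.mem_univ, true_and, Finset.mem_image]
  constructor
  · rintro ⟨j, u, hu, rfl⟩; exact ⟨j, u, hu, rfl⟩
  · rintro ⟨j, u, hu, rfl⟩; exact ⟨j, u, hu, rfl⟩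

lemma card_SofF {p L k : ℕ} (hp : p ≤ L) (w : Fin (2^p) → Finset (Fin (L-p) → Bool))
    (hc : ∀ j, (w j).card = 2 ^ k) : (SofF p L w).card = 2 ^ (p + k) := by
  have hdisj : ∀ j ∈ (Finset.univ : Finset (Fin (2^p))), ∀ j' ∈ Finset.univ, j ≠ j' →
      Disjoint ((w j).image (encF p L j)) ((w j').image (encF p L j')) := by
    intro j _ j' _ hjj
    rw [Finset.disjoint_left]
    intro x hx hx'
    obtain ⟨u, _, rfl⟩ := Finset.mem_image.mp hx
    obtain ⟨u', _, he⟩ := Finset.mem_image.mp hx'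
    exact hjj ((encF_inj hp he).1).symm
  rw [SofF, Finset.card_biUnion hdisj]
  have heach : ∀ j : Fin (2^p), ((w j).image (encF p L j)).card = 2 ^ k := by
    intro j
    rw [Finset.card_image_of_injective _ (fun u u' h => (encF_inj hp h).2), hc j]
  rw [Finset.sum_congr rfl (fun j _ => heach j)]
  simp only [Finset.sum_const, Finset.card_univ, Fintype.card_fin, smul_eq_mul]
  rw [← pow_add]

/-- Construction 3 (improved index-based construction): with `M = 2^z`, `p = z - k`
index bits and an outer block code `D` of length `2^p` over the alphabet of
`2^k`-element subsets of `{0,1}^{L-p}` with minimum distance at least `δ + 1`,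
the code `C₃` is an `(s,t,L)_H` error-correcting code for all `s + 2t ≤ δ`. -/
theorem stmt_5 (L z k δ s t : ℕ) (hL : 1 ≤ L) (hk : k ≤ z) (hp : z - k ≤ L)
    (hM : 2 ^ z ≤ 2 ^ L)
    (D : Set (Fin (2 ^ (z - k)) → Finset (Fin (L - (z - k)) → Bool)))
    (hcard : ∀ w ∈ D, ∀ j, (w j).card = 2 ^ k)
    (hD : ∀ u ∈ D, ∀ v ∈ D, u ≠ v →
      δ + 1 ≤ (Finset.univ.filter fun j => u j ≠ v j).card)
    (hst : s + 2 * t ≤ δ) :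
    isHamCode L s t L
      { S | ∃ w ∈ D,
          S = Finset.univ.biUnion fun j =>
            (w j).image fun u => concatVec (z - k) L (natToBits (z - k) j) u } := by
  classical
  intro S₁ hS₁ S₂ hS₂ hne
  obtain ⟨w, hw, hSw⟩ := hS₁
  obtain ⟨v, hv, hSv⟩ := hS₂
  rw [Set.eq_empty_iff_forall_notMem]
  rintro S' ⟨h1, h2⟩
  obtain ⟨U₁, Lo₁, F₁, f₁, _, _, _, hU1, hLo1, hF1, _, hS'1⟩ := h1
  obtain ⟨U₂, Lo₂, F₂, f₂, _, _, _, hU2, hLo2, hF2, _, hS'2⟩ := h2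
  have hSw' : S₁ = SofF (z-k) L w := hSw
  have hSv' : S₂ = SofF (z-k) L v := hSv
  have hwv : w ≠ v := by
    rintro rfl; exact hne (hSw'.trans hSv'.symm)
  have key : ∀ j : Fin (2^(z-k)), w j ≠ v j → ∃ u, u ∈ w j ∧ u ∉ v j := by
    intro j hj
    by_contra hc
    push_neg at hc
    exact hj (Finset.eq_of_subset_of_card_le hc
      (by rw [hcard w hw j, hcard v hv j]))
  choose! g hg1 hg2 using key
  have hinj : (Finset.univ.filter fun j => w j ≠ v j).card ≤
      (SofF (z-k) L w \ SofF (z-k) L v).card := by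
    apply Finset.card_le_card_of_injOn (fun j => encF (z-k) L j (g j))
    · intro j hj
      rw [Finset.mem_coe, Finset.mem_filter] at hj
      have hne' := hj.2
      rw [Finset.mem_coe, Finset.mem_sdiff]
      constructor
      · exact (mem_SofF w _).mpr ⟨j, g j, hg1 j hne', rfl⟩
      · intro hmem
        obtain ⟨j', u', hu', he⟩ := (mem_SofF v _).mp hmem
        obtain ⟨rfl, rfl⟩ := encF_inj hp he
        exact hg2 j hne' hu'
    · intro j _ j' _ he
      exact (encF_inj hp he).1
  have hd := hD w hw v hv hwv
  have hpk : z - k + k = z := by omega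
  have c1 : (SofF (z-k) L w).card = 2 ^ z := by
    rw [card_SofF hp w (hcard w hw), hpk]
  have c2 : (SofF (z-k) L v).card = 2 ^ z := by
    rw [card_SofF hp v (hcard v hv), hpk]
  have hU2card : 2 ^ z ≤ U₂.card + s + t := by
    have hA : S₂.card ≤ (U₂ ∪ Lo₂).card + F₂.card := by
      rw [← hU2]; exact Finset.card_union_le _ _
    have hB : (U₂ ∪ Lo₂).card ≤ U₂.card + Lo₂.card := Finset.card_union_le _ _
    have hC : S₂.card = 2 ^ z := by rw [hSv', c2]
    omega
  have hU2sub : U₂ ⊆ U₁ ∪ F₁.image f₁ := by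
    rw [← hS'1, hS'2]; exact Finset.subset_union_left
  have hcap : U₂.card ≤ (U₂ ∩ U₁).card + t := by
    have hsub : U₂ ⊆ (U₂ ∩ U₁) ∪ F₁.image f₁ := by
      intro x hx
      rcases Finset.mem_union.mp (hU2sub hx) with h | h
      · exact Finset.mem_union_left _ (Finset.mem_inter.mpr ⟨hx, h⟩)
      · exact Finset.mem_union_right _ h
    have him : (F₁.image f₁).card ≤ t := (Finset.card_image_le).trans hF1
    calc U₂.card ≤ ((U₂ ∩ U₁) ∪ F₁.image f₁).card := Finset.card_le_card hsub
      _ ≤ (U₂ ∩ U₁).card + (F₁.image f₁).card := Finset.card_union_le _ _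
      _ ≤ (U₂ ∩ U₁).card + t := by omega
  have hinter : (U₂ ∩ U₁).card ≤ (SofF (z-k) L w ∩ SofF (z-k) L v).card := by
    apply Finset.card_le_card
    intro x hx
    rw [Finset.mem_inter] at hx ⊢
    refine ⟨?_, ?_⟩
    · have hs : U₁ ⊆ SofF (z-k) L w := by
        rw [← hSw', ← hU1]
        exact Finset.subset_union_left.trans Finset.subset_union_left
      exact hs hx.2
    · have hs : U₂ ⊆ SofF (z-k) L v := by
        rw [← hSv', ← hU2]
        exact Finset.subset_union_left.trans Finset.subset_union_left
      exact hs hx.1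
  have hsplit : (SofF (z-k) L w \ SofF (z-k) L v).card +
      (SofF (z-k) L w ∩ SofF (z-k) L v).card = (SofF (z-k) L w).card :=
    Finset.card_sdiff_add_card_inter _ _
  omega
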